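/- arXiv:2106.02073 — 3 statements merged into one kernel-verified Lean document; each statement's English description precedes it below -/
import Mathlib

section
/- Let $\omega_1, \dots, \omega_{C-1}$ be the nonzero singular values of the SNR matrix $\Sigma_W^{-1/2}\bar{M}$ of a feature matrix $\bar{H}$ on the zero-global-mean central path with $\lambda = 0$. Then the MSE loss of the least-squares classifier equals $\mathcal{L} = \frac{1}{2}\sum_{j=1}^{C-1}\frac{1}{\omega_j^2 + C}$. -/
/-!
Whitening with `S = Σ_W^{-1/2}` gives `Σ_T = S⁻¹ (1 + K Kᵀ / C) S⁻¹` for the SNR matrix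
`K = S M̄ = U diag(ω) Vᵀ`, and a Woodbury-type identity inverts `1 + K Kᵀ / C` on the range of `U`.
Hence `W_LS = V diag(ω / (ω² + C)) Uᵀ S`, so that `W_LS M̄ = V diag(ω² / (ω² + C)) Vᵀ` and
`W_LS Σ_W W_LSᵀ = V diag(ω² / (ω² + C)²) Vᵀ`. Since `M̄ 𝟙 = 0` and `ω > 0`, the `C - 1` columns of
`V` are orthogonal to `𝟙`, so `Φ = V Vᵀ`. Each singular value then contributes
`C / (2 (ω² + C)²) + ω² / (2 (ω² + C)²) = 1 / (2 (ω² + C))` to the loss.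
-/

open Matrix Finset

namespace Matrix

section Real

variable {n : Type*} [Fintype n] [DecidableEq n]

lemma transpose_cfc (f : ℝ → ℝ) (A : Matrix n n ℝ) : (cfc f A)ᵀ = cfc f A :=
  (cfc_predicate f A : IsSelfAdjoint _)

lemma PosSemidef.eigenvectorUnitary_mul_diagonal_sqrt_mul_star {A : Matrix n n ℝ}
    (hA : A.PosSemidef) :
    hA.1.eigenvectorUnitary * diagonal (Real.sqrt ∘ hA.1.eigenvalues) *
      (star hA.1.eigenvectorUnitary : Matrix n n ℝ) = cfc Real.sqrt A := by
  rw [hA.1.cfc_eq, IsHermitian.cfc, Unitary.conjStarAlgAut_apply]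
  rfl

lemma PosSemidef.cfc_sqrt_mul_self {A : Matrix n n ℝ} (hA : A.PosSemidef) :
    cfc Real.sqrt A * cfc Real.sqrt A = A := by
  rw [← cfc_mul Real.sqrt Real.sqrt A]
  conv_rhs => rw [← cfc_id' ℝ A hA.1.isSelfAdjoint]
  refine cfc_congr fun x hx => Real.mul_self_sqrt ?_
  rw [hA.1.spectrum_real_eq_range_eigenvalues] at hx
  obtain ⟨i, rfl⟩ := hx
  exact hA.eigenvalues_nonneg i

lemma PosDef.isUnit_det_cfc_sqrt {A : Matrix n n ℝ} (hA : A.PosDef) :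
    IsUnit (cfc Real.sqrt A).det := by
  have h := (isUnit_iff_isUnit_det _).mp hA.isUnit
  rw [← hA.posSemidef.cfc_sqrt_mul_self, det_mul] at h
  exact (IsUnit.mul_iff.mp h).1

lemma PosDef.inv_cfc_sqrt_inv_mul_transpose {A : Matrix n n ℝ} (hA : A.PosDef) :
    (cfc Real.sqrt A⁻¹)⁻¹ * (cfc Real.sqrt A⁻¹)⁻¹ᵀ = A := by
  rw [transpose_nonsing_inv, transpose_cfc, ← Matrix.mul_inv_rev,
    hA.inv.posSemidef.cfc_sqrt_mul_self,
    nonsing_inv_nonsing_inv _ ((isUnit_iff_isUnit_det _).mp hA.isUnit)]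

end Real

lemma sum_sum_sq_eq_trace_mul_transpose {R m n : Type*} [CommSemiring R] [Fintype m]
    [Fintype n] (A : Matrix m n R) : ∑ i, ∑ j, A i j ^ 2 = trace (A * Aᵀ) := by
  simp [trace, mul_apply, sq]

variable {R : Type*} {l m n k : Type*} [Fintype k] [DecidableEq k]

section CommSemiring

variable [CommSemiring R]

lemma mul_diagonal_mul_transpose_mul_mul_diagonal_mul_transpose [Fintype m] (V : Matrix l k R)
    {U : Matrix m k R} (hU : Uᵀ * U = 1) (a b : k → R) (W : Matrix n k R) :
    V * diagonal a * Uᵀ * (U * diagonal b * Wᵀ) = V * diagonal (a * b) * Wᵀ := by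
  rw [Matrix.mul_assoc, ← Matrix.mul_assoc Uᵀ, ← Matrix.mul_assoc Uᵀ, hU, Matrix.one_mul,
    ← Matrix.mul_assoc, Matrix.mul_assoc V, diagonal_mul_diagonal']
  rfl

lemma transpose_mul_diagonal_mul_transpose (V : Matrix l k R) (a : k → R) (U : Matrix m k R) :
    (V * diagonal a * Uᵀ)ᵀ = U * diagonal a * Vᵀ := by
  rw [transpose_mul, transpose_mul, diagonal_transpose, transpose_transpose, Matrix.mul_assoc]

lemma smul_mul_diagonal_mul_transpose (c : R) (V : Matrix l k R) (a : k → R)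
    (U : Matrix m k R) : c • (V * diagonal a * Uᵀ) = V * diagonal (c • a) * Uᵀ := by
  rw [diagonal_smul, Matrix.mul_smul, Matrix.smul_mul]

lemma trace_mul_diagonal_mul_transpose [Fintype m] {V : Matrix m k R} (hV : Vᵀ * V = 1)
    (a : k → R) : trace (V * diagonal a * Vᵀ) = ∑ j, a j := by
  rw [trace_mul_comm, ← Matrix.mul_assoc, hV, Matrix.one_mul, trace_diagonal]

lemma sum_sum_sq_mul_diagonal_mul_transpose [Fintype m] {V : Matrix m k R} (hV : Vᵀ * V = 1)
    (a : k → R) : ∑ i, ∑ j, (V * diagonal a * Vᵀ) i j ^ 2 = ∑ j, a j ^ 2 := by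
  rw [sum_sum_sq_eq_trace_mul_transpose, transpose_mul_diagonal_mul_transpose,
    mul_diagonal_mul_transpose_mul_mul_diagonal_mul_transpose _ hV,
    trace_mul_diagonal_mul_transpose hV]
  simp [sq]

end CommSemiring

lemma mul_diagonal_mul_transpose_sub_mul_transpose [CommRing R] [Fintype n] (V : Matrix m k R)
    (a : k → R) (W : Matrix n k R) : V * diagonal a * Wᵀ - V * Wᵀ = V * diagonal (a - 1) * Wᵀ := by
  have h : diagonal (a - 1) = diagonal a - 1 := by
    rw [← diagonal_one, diagonal_sub]
    rfl
  rw [h, Matrix.mul_sub, Matrix.sub_mul, Matrix.mul_one]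

section Field

variable [Field R]

lemma inv_one_add_mul_diagonal_mul_transpose [Fintype m] [DecidableEq m] {U : Matrix m k R}
    (hU : Uᵀ * U = 1) {a : k → R} (ha : ∀ j, 1 + a j ≠ 0) :
    (1 + U * diagonal a * Uᵀ)⁻¹ = 1 - U * diagonal (fun j => a j / (1 + a j)) * Uᵀ := by
  refine inv_eq_right_inv ?_
  have hab : ∀ j, a j - (a j / (1 + a j) + a j * (a j / (1 + a j))) = 0 := fun j => by
    field_simp [ha j]
    ring
  rw [mul_sub, mul_one, add_mul, one_mul,
    mul_diagonal_mul_transpose_mul_mul_diagonal_mul_transpose _ hU, add_sub_assoc, add_eq_left,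
    ← Matrix.add_mul, ← Matrix.mul_add, ← Matrix.sub_mul, ← Matrix.mul_sub, diagonal_add,
    diagonal_sub]
  simp only [Pi.mul_apply, hab, diagonal_zero, Matrix.mul_zero, Matrix.zero_mul]

lemma mul_transpose_add_inv_dotProduct_smul_vecMulVec_eq_one [Fintype m] [DecidableEq m]
    (hcard : Fintype.card m = Fintype.card k + 1) {V : Matrix m k R} (hV : Vᵀ * V = 1)
    {u : m → R} (hVu : Vᵀ *ᵥ u = 0) (hu : u ⬝ᵥ u ≠ 0) :
    V * Vᵀ + (u ⬝ᵥ u)⁻¹ • vecMulVec u u = 1 := by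
  have e : m ≃ k ⊕ Unit := Fintype.equivOfCardEq (by simp [hcard])
  have huV : u ᵥ* V = 0 := by simpa using (vecMul_transpose Vᵀ u).trans hVu
  have hleft : fromRows Vᵀ (replicateRow Unit ((u ⬝ᵥ u)⁻¹ • u)) *
      fromCols V (replicateCol Unit u) = 1 := by
    rw [fromRows_mul_fromCols, hV, ← replicateCol_mulVec, hVu, ← replicateRow_vecMul,
      replicateRow_mul_replicateCol, smul_vecMul, huV, smul_dotProduct, smul_eq_mul,
      inv_mul_cancel₀ hu, ← fromBlocks_one]
    congr
    ext
    simp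
  rw [← (fromCols_mul_fromRows_eq_one_comm e _ _ _ _).mpr hleft, fromCols_mul_fromRows,
    vecMulVec_eq Unit, replicateRow_smul, Matrix.mul_smul]

lemma mul_transpose_eq_one_sub_smul_of_transpose_mulVec_eq_zero [CharZero R] {c : ℕ}
    (hcard : Fintype.card k + 1 = c) {V : Matrix (Fin c) k R} (hV : Vᵀ * V = 1)
    (hV1 : Vᵀ *ᵥ (fun _ => 1) = 0) : V * Vᵀ = 1 - (1 / (c : R)) • of fun _ _ => 1 := by
  have hc : (c : R) ≠ 0 := Nat.cast_ne_zero.mpr (by omega)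
  have hcompl := mul_transpose_add_inv_dotProduct_smul_vecMulVec_eq_one
    (by rw [Fintype.card_fin, hcard]) hV hV1 (by simpa [dotProduct] using hc)
  have hones : vecMulVec (fun _ => (1 : R)) (fun _ => 1) = of fun (_ _ : Fin c) => (1 : R) := by
    ext
    simp [vecMulVec_apply]
  rw [← hcompl, hones]
  simp [dotProduct]

lemma transpose_mulVec_eq_zero_of_mul_diagonal_mul_transpose_mulVec_eq_zero [Fintype m]
    [Fintype n] {U : Matrix m k R} (hU : Uᵀ * U = 1) {ω : k → R} (hω : ∀ j, ω j ≠ 0)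
    {V : Matrix n k R} {x : n → R} (h : (U * diagonal ω * Vᵀ) *ᵥ x = 0) : Vᵀ *ᵥ x = 0 := by
  have hd : diagonal ω *ᵥ (Vᵀ *ᵥ x) = Uᵀ *ᵥ ((U * diagonal ω * Vᵀ) *ᵥ x) := by
    rw [mulVec_mulVec, mulVec_mulVec, ← Matrix.mul_assoc, ← Matrix.mul_assoc, hU, Matrix.one_mul]
  rw [h, mulVec_zero] at hd
  funext j
  have hj := congrFun hd j
  rw [mulVec_diagonal] at hj
  exact (mul_eq_zero.mp hj).resolve_left (hω j)

lemma smul_transpose_mul_inv_add_smul_mul_transpose [Fintype n] {p : Type*} [Fintype p]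
    [DecidableEq p] {A : Matrix p p R} (hA : IsUnit A.det) (K : Matrix p n R) (c : R) :
    c • (A * K)ᵀ * (A * Aᵀ + c • (A * K * (A * K)ᵀ))⁻¹ =
      c • Kᵀ * (1 + c • (K * Kᵀ))⁻¹ * A⁻¹ := by
  have hAt : IsUnit Aᵀ.det := by rwa [det_transpose]
  have hcongr : A * Aᵀ + c • (A * K * (A * K)ᵀ) = A * (1 + c • (K * Kᵀ)) * Aᵀ := by
    simp only [transpose_mul, Matrix.mul_add, Matrix.add_mul, Matrix.mul_one, Matrix.mul_smul,
      Matrix.smul_mul, Matrix.mul_assoc]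
  rw [hcongr, Matrix.mul_inv_rev, Matrix.mul_inv_rev, transpose_mul, Matrix.smul_mul,
    Matrix.smul_mul, Matrix.smul_mul, Matrix.mul_assoc, ← Matrix.mul_assoc Aᵀ,
    mul_nonsing_inv _ hAt, Matrix.one_mul, Matrix.mul_assoc]

lemma mul_nonsing_inv_mul_mul_transpose_mul_transpose {p : Type*} [Fintype p] [DecidableEq p]
    {A : Matrix p p R} (hA : IsUnit A.det) (B : Matrix n p R) :
    B * A⁻¹ * (A * Aᵀ) * (B * A⁻¹)ᵀ = B * Bᵀ := by
  have hAt : IsUnit Aᵀ.det := by rwa [det_transpose]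
  simp only [transpose_mul, transpose_nonsing_inv, Matrix.mul_assoc]
  rw [nonsing_inv_mul_cancel_left _ _ hA, mul_nonsing_inv_cancel_left _ _ hAt]

lemma smul_transpose_mul_inv_one_add_smul_mul_transpose [Fintype m] [DecidableEq m] [Fintype n]
    {U : Matrix m k R} (hU : Uᵀ * U = 1) {V : Matrix n k R} (hV : Vᵀ * V = 1) (ω : k → R)
    (c : R) (h : ∀ j, 1 + c * ω j ^ 2 ≠ 0) :
    c • (U * diagonal ω * Vᵀ)ᵀ * (1 + c • (U * diagonal ω * Vᵀ * (U * diagonal ω * Vᵀ)ᵀ))⁻¹ =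
      V * diagonal (fun j => c * ω j / (1 + c * ω j ^ 2)) * Uᵀ := by
  rw [transpose_mul_diagonal_mul_transpose,
    mul_diagonal_mul_transpose_mul_mul_diagonal_mul_transpose _ hV,
    smul_mul_diagonal_mul_transpose, smul_mul_diagonal_mul_transpose,
    inv_one_add_mul_diagonal_mul_transpose hU (by simpa [sq] using h), Matrix.mul_sub,
    Matrix.mul_one, mul_diagonal_mul_transpose_mul_mul_diagonal_mul_transpose _ hU,
    ← Matrix.sub_mul, ← Matrix.mul_sub, diagonal_sub]
  congr 3
  funext j
  simp only [Pi.mul_apply, Pi.smul_apply, smul_eq_mul]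
  field_simp [h j]
  ring

end Field

end Matrix

theorem mse_loss_spectral_representation_general
    (P C : ℕ) (hC : 0 < C)
    (SigW : Matrix (Fin P) (Fin P) ℝ) (hpd : SigW.PosDef)
    (M : Matrix (Fin P) (Fin C) ℝ)
    (hM1 : M.mulVec (fun _ => (1 : ℝ)) = 0)
    -- `S` is the inverse positive-definite square root `Σ_W^{-1/2}`
    (S : Matrix (Fin P) (Fin P) ℝ)
    (hS : S = (hpd.inv).posSemidef.1.eigenvectorUnitary *
      Matrix.diagonal (Real.sqrt ∘ (hpd.inv).posSemidef.1.eigenvalues) *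
      (star (hpd.inv).posSemidef.1.eigenvectorUnitary : Matrix (Fin P) (Fin P) ℝ))
    -- SVD of the SNR matrix with nonzero singular values ω
    (ω : Fin (C - 1) → ℝ) (hω : ∀ j, 0 < ω j)
    (U : Matrix (Fin P) (Fin (C - 1)) ℝ) (hU : Uᵀ * U = 1)
    (V : Matrix (Fin C) (Fin (C - 1)) ℝ) (hV : Vᵀ * V = 1)
    (hSVD : S * M = U * Matrix.diagonal ω * Vᵀ)
    -- total covariance, least-squares classifier and the centering matrix Φ
    (SigT : Matrix (Fin P) (Fin P) ℝ)
    (hSigT : SigT = SigW + ((1 : ℝ) / C) • (M * Mᵀ))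
    (WLS : Matrix (Fin C) (Fin P) ℝ)
    (hWLS : WLS = ((1 : ℝ) / C) • Mᵀ * SigT⁻¹)
    (Φ : Matrix (Fin C) (Fin C) ℝ)
    (hΦ : Φ = (1 : Matrix (Fin C) (Fin C) ℝ) - ((1 : ℝ) / C) • Matrix.of (fun _ _ => (1 : ℝ))) :
    (1 / (2 * C)) * (∑ k : Fin C, ∑ c : Fin C, ((WLS * M) k c - Φ k c) ^ 2)
      + (1 / 2) * Matrix.trace (WLS * SigW * WLSᵀ)
    = (1 / 2) * ∑ j : Fin (C - 1), 1 / ((ω j) ^ 2 + C) := by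
  rw [hpd.inv.posSemidef.eigenvectorUnitary_mul_diagonal_sqrt_mul_star] at hS
  have hSdet : IsUnit S.det := hS ▸ hpd.inv.isUnit_det_cfc_sqrt
  have hSinv : IsUnit S⁻¹.det := isUnit_nonsing_inv_det _ hSdet
  have hSigW : SigW = S⁻¹ * S⁻¹ᵀ := hS ▸ hpd.inv_cfc_sqrt_inv_mul_transpose.symm
  have hM : M = S⁻¹ * (U * diagonal ω * Vᵀ) := by
    rw [← hSVD, nonsing_inv_mul_cancel_left _ _ hSdet]
  have hWLS' : WLS = V * diagonal (fun j => ω j / (ω j ^ 2 + C)) * Uᵀ * S⁻¹⁻¹ := by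
    rw [hWLS, hSigT, hSigW, hM,
      smul_transpose_mul_inv_add_smul_mul_transpose hSinv,
      smul_transpose_mul_inv_one_add_smul_mul_transpose hU hV _ _ (fun j => by positivity)]
    congr 4
    funext j
    field_simp
    ring
  have hΦV : Φ = V * Vᵀ := hΦ.trans
    (mul_transpose_eq_one_sub_smul_of_transpose_mulVec_eq_zero (by rw [Fintype.card_fin]; omega) hV
      (transpose_mulVec_eq_zero_of_mul_diagonal_mul_transpose_mulVec_eq_zero hU
        (fun j => (hω j).ne') (by rw [← hSVD, ← mulVec_mulVec, hM1, mulVec_zero]))).symm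
  simp only [← Matrix.sub_apply]
  rw [hWLS', hΦV, hM, hSigW, Matrix.mul_assoc _ S⁻¹⁻¹, nonsing_inv_mul_cancel_left _ _ hSinv,
    mul_diagonal_mul_transpose_mul_mul_diagonal_mul_transpose _ hU,
    mul_diagonal_mul_transpose_sub_mul_transpose, sum_sum_sq_mul_diagonal_mul_transpose hV,
    mul_nonsing_inv_mul_mul_transpose_mul_transpose hSinv, transpose_mul_diagonal_mul_transpose,
    mul_diagonal_mul_transpose_mul_mul_diagonal_mul_transpose _ hU,
    trace_mul_diagonal_mul_transpose hV, mul_sum, mul_sum, mul_sum, ← sum_add_distrib]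
  refine sum_congr rfl fun j _ => ?_
  have hden : ω j ^ 2 + C ≠ 0 := by positivity
  simp only [Pi.sub_apply, Pi.mul_apply, Pi.one_apply]
  field_simp
  ring

/-- Spectral representation of the MSE loss of the least-squares
classifier on the zero-global-mean central path (`λ = 0`):
`L = (1/2) ∑_j 1/(ω_j² + C)` where `ω_j` are the nonzero singular values of the
SNR matrix `Σ_W^{-1/2} M̄`. -/
theorem mse_loss_spectral_representation
    (P C : ℕ) (hC : 0 < C) (hPC : C ≤ P)
    (SigW : Matrix (Fin P) (Fin P) ℝ) (hpd : SigW.PosDef)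
    (M : Matrix (Fin P) (Fin C) ℝ)
    (hM1 : M.mulVec (fun _ => (1 : ℝ)) = 0)
    -- `S` is the inverse positive-definite square root `Σ_W^{-1/2}`
    (S : Matrix (Fin P) (Fin P) ℝ)
    (hS : S = (hpd.inv).posSemidef.1.eigenvectorUnitary *
      Matrix.diagonal (Real.sqrt ∘ (hpd.inv).posSemidef.1.eigenvalues) *
      (star (hpd.inv).posSemidef.1.eigenvectorUnitary : Matrix (Fin P) (Fin P) ℝ))
    -- SVD of the SNR matrix with nonzero singular values ω
    (ω : Fin (C - 1) → ℝ) (hω : ∀ j, 0 < ω j)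
    (U : Matrix (Fin P) (Fin (C - 1)) ℝ) (hU : Uᵀ * U = 1)
    (V : Matrix (Fin C) (Fin (C - 1)) ℝ) (hV : Vᵀ * V = 1)
    (hSVD : S * M = U * Matrix.diagonal ω * Vᵀ)
    -- total covariance, least-squares classifier and the centering matrix Φ
    (SigT : Matrix (Fin P) (Fin P) ℝ)
    (hSigT : SigT = SigW + ((1 : ℝ) / C) • (M * Mᵀ))
    (WLS : Matrix (Fin C) (Fin P) ℝ)
    (hWLS : WLS = ((1 : ℝ) / C) • Mᵀ * SigT⁻¹)
    (Φ : Matrix (Fin C) (Fin C) ℝ)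
    (hΦ : Φ = (1 : Matrix (Fin C) (Fin C) ℝ) - ((1 : ℝ) / C) • Matrix.of (fun _ _ => (1 : ℝ))) :
    (1 / (2 * C)) * (∑ k : Fin C, ∑ c : Fin C, ((WLS * M) k c - Φ k c) ^ 2)
      + (1 / 2) * Matrix.trace (WLS * SigW * WLSᵀ)
    = (1 / 2) * ∑ j : Fin (C - 1), 1 / ((ω j) ^ 2 + C) :=
  mse_loss_spectral_representation_general P C hC SigW hpd M hM1 S hS ω hω U hU V hV hSVD SigT hSigT
    WLS hWLS Φ hΦ
end

section
/- Let $\omega_1, \dots, \omega_{C-1}: [0,\infty) \to (0,\infty)$ each satisfy $c_1\log(\omega_j(t)) + c_2\,\omega_j(t)^2 + c_3\,\omega_j(t)^4 = a_j + t$ with common positive constants $c_1, c_2, c_3$ and possibly different constants $a_j$. Then $\lim_{t\to\infty}\frac{\max_j \omega_j(t)}{\min_j \omega_j(t)} = 1$. -/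
/-!
Write `F x = c₁ log x + c₂ x² + c₃ x⁴`. Because the logarithmic and quadratic terms are
increasing, `c₃ |x⁴ - y⁴| ≤ |F x - F y|`; hence `ω i t ⁴ - ω j t ⁴` stays bounded by
`|a i - a j| / c₃`, while `ω j t ⁴ → ∞` since `F (ω j t) = a j + t`. So every ratio
`ω i t / ω j t` tends to `1`, and over a finite index set the ratio of the maximum to the
minimum is at each time one of these ratios.
-/

open Real Filter Topology

theorem tendsto_of_tendsto_pow_of_nonneg {α : Type*} {l : Filter α} {r : α → ℝ} {n : ℕ}
    (hn : n ≠ 0) (hr : ∀ᶠ t in l, 0 ≤ r t) (h : Tendsto (fun t => r t ^ n) l (𝓝 1)) :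
    Tendsto r l (𝓝 1) := by
  have hroot := h.rpow_const (p := (n⁻¹ : ℝ)) (Or.inl one_ne_zero)
  rw [one_rpow] at hroot
  refine hroot.congr' ?_
  filter_upwards [hr] with t ht using pow_rpow_inv_natCast ht hn

theorem tendsto_div_of_abs_sub_le {α : Type*} {l : Filter α} {u v : α → ℝ} {K : ℝ}
    (hv : Tendsto v l atTop) (huv : ∀ᶠ t in l, |u t - v t| ≤ K) :
    Tendsto (fun t => u t / v t) l (𝓝 1) := by
  have hsmall : Tendsto (fun t => (v t)⁻¹ * (u t - v t)) l (𝓝 0) :=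
    (tendsto_inv_atTop_zero.comp hv).zero_mul_isBoundedUnder_le
      (isBoundedUnder_of_eventually_le huv)
  rw [← add_zero (1 : ℝ)]
  refine (tendsto_const_nhds.add hsmall).congr' ?_
  filter_upwards [hv.eventually_gt_atTop 0] with t ht
  field_simp
  ring

theorem tendsto_iSup_div_iInf {α ι : Type*} [Finite ι] [Nonempty ι] {l : Filter α}
    {g : ι → α → ℝ} (h : ∀ i j, Tendsto (fun t => g i t / g j t) l (𝓝 1)) :
    Tendsto (fun t => (⨆ i, g i t) / (⨅ i, g i t)) l (𝓝 1) := by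
  rw [Metric.tendsto_nhds]
  intro ε hε
  have hall : ∀ᶠ t in l, ∀ i j, dist (g i t / g j t) 1 < ε :=
    eventually_all.2 fun i => eventually_all.2 fun j => Metric.tendsto_nhds.1 (h i j) ε hε
  filter_upwards [hall] with t ht
  obtain ⟨i, hi⟩ := exists_eq_ciSup_of_finite (f := fun i => g i t)
  obtain ⟨j, hj⟩ := exists_eq_ciInf_of_finite (f := fun i => g i t)
  rw [← hi, ← hj]
  exact ht i j

noncomputable def logQuartic (c₁ c₂ c₃ x : ℝ) : ℝ := c₁ * log x + c₂ * x ^ 2 + c₃ * x ^ 4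

section logQuartic

variable {c₁ c₂ c₃ : ℝ}

theorem logQuartic_le (hc₁ : 0 ≤ c₁) (hc₂ : 0 ≤ c₂) {x : ℝ} (hx : 0 < x) :
    logQuartic c₁ c₂ c₃ x ≤ (c₁ + c₂ + c₃) * x ^ 4 + c₁ + c₂ := by
  have hlog : log x ≤ x ^ 4 + 1 := by
    nlinarith [log_le_sub_one_of_pos hx, sq_nonneg (x ^ 2 - 1), sq_nonneg (x - 1)]
  have hsq : x ^ 2 ≤ x ^ 4 + 1 := by nlinarith [sq_nonneg (x ^ 2 - 1)]
  unfold logQuartic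
  nlinarith [mul_le_mul_of_nonneg_left hlog hc₁, mul_le_mul_of_nonneg_left hsq hc₂]

theorem mul_pow_four_sub_le_logQuartic_sub (hc₁ : 0 ≤ c₁) (hc₂ : 0 ≤ c₂) {x y : ℝ}
    (hy : 0 < y) (hyx : y ≤ x) :
    c₃ * (x ^ 4 - y ^ 4) ≤ logQuartic c₁ c₂ c₃ x - logQuartic c₁ c₂ c₃ y := by
  have hlog : log y ≤ log x := log_le_log hy hyx
  have hsq : y ^ 2 ≤ x ^ 2 := pow_le_pow_left₀ hy.le hyx 2
  unfold logQuartic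
  nlinarith [mul_le_mul_of_nonneg_left hlog hc₁, mul_le_mul_of_nonneg_left hsq hc₂]

theorem mul_abs_pow_four_sub_le (hc₁ : 0 ≤ c₁) (hc₂ : 0 ≤ c₂) {x y : ℝ} (hx : 0 < x) (hy : 0 < y) :
    c₃ * |x ^ 4 - y ^ 4| ≤ |logQuartic c₁ c₂ c₃ x - logQuartic c₁ c₂ c₃ y| := by
  wlog hyx : y ≤ x generalizing x y
  · rw [abs_sub_comm, abs_sub_comm (logQuartic _ _ _ x)]
    exact this hy hx (le_of_not_ge hyx)
  rw [abs_of_nonneg (sub_nonneg.2 (pow_le_pow_left₀ hy.le hyx 4))]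
  exact (mul_pow_four_sub_le_logQuartic_sub hc₁ hc₂ hy hyx).trans (le_abs_self _)

theorem tendsto_pow_four_atTop_of_logQuartic_eq {α : Type*} {l : Filter α} {s x : α → ℝ}
    (hc₁ : 0 ≤ c₁) (hc₂ : 0 ≤ c₂) (hc₃ : 0 < c₃) {b : ℝ} (hs : Tendsto s l atTop)
    (hx : ∀ᶠ t in l, 0 < x t ∧ logQuartic c₁ c₂ c₃ (x t) = b + s t) :
    Tendsto (fun t => x t ^ 4) l atTop := by
  have hlower : Tendsto (fun t => (s t + (b - c₁ - c₂)) / (c₁ + c₂ + c₃)) l atTop :=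
    (tendsto_atTop_add_const_right _ _ hs).atTop_div_const (by linarith)
  refine tendsto_atTop_mono' l ?_ hlower
  filter_upwards [hx] with t ⟨hxt, hxs⟩
  have := logQuartic_le (c₃ := c₃) hc₁ hc₂ hxt
  rw [div_le_iff₀ (by linarith)]
  linarith

theorem tendsto_div_of_logQuartic_eq {α : Type*} {l : Filter α} {s x y : α → ℝ}
    (hc₁ : 0 ≤ c₁) (hc₂ : 0 ≤ c₂) (hc₃ : 0 < c₃) {a b : ℝ} (hs : Tendsto s l atTop)
    (hx : ∀ᶠ t in l, 0 < x t ∧ logQuartic c₁ c₂ c₃ (x t) = a + s t)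
    (hy : ∀ᶠ t in l, 0 < y t ∧ logQuartic c₁ c₂ c₃ (y t) = b + s t) :
    Tendsto (fun t => x t / y t) l (𝓝 1) := by
  have hdiff : ∀ᶠ t in l, |x t ^ 4 - y t ^ 4| ≤ |a - b| / c₃ := by
    filter_upwards [hx, hy] with t ⟨hxt, hxs⟩ ⟨hyt, hys⟩
    have := mul_abs_pow_four_sub_le (c₃ := c₃) hc₁ hc₂ hxt hyt
    rw [hxs, hys, add_sub_add_right_eq_sub] at this
    rwa [le_div_iff₀' hc₃]
  have hquot := tendsto_div_of_abs_sub_le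
    (tendsto_pow_four_atTop_of_logQuartic_eq hc₁ hc₂ hc₃ hs hy) hdiff
  refine tendsto_of_tendsto_pow_of_nonneg four_ne_zero ?_ (by simpa only [div_pow] using hquot)
  filter_upwards [hx, hy] with t ⟨hxt, _⟩ ⟨hyt, _⟩ using div_nonneg hxt.le hyt.le

end logQuartic

theorem snr_singular_values_equalize_general
    (C : ℕ) [Nonempty (Fin (C - 1))]
    (c₁ c₂ c₃ : ℝ) (hc₁ : 0 < c₁) (hc₂ : 0 < c₂) (hc₃ : 0 < c₃)
    (a : Fin (C - 1) → ℝ)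
    (ω : Fin (C - 1) → ℝ → ℝ)
    (hpos : ∀ j t, 0 ≤ t → 0 < ω j t)
    (heq : ∀ j t, 0 ≤ t →
      c₁ * Real.log (ω j t) + c₂ * (ω j t) ^ 2 + c₃ * (ω j t) ^ 4 = a j + t) :
    Tendsto (fun t => (⨆ j, ω j t) / (⨅ j, ω j t)) atTop (nhds 1) := by
  have hω : ∀ j, ∀ᶠ t in atTop, 0 < ω j t ∧ logQuartic c₁ c₂ c₃ (ω j t) = a j + id t :=
    fun j => (eventually_ge_atTop 0).mono fun t ht => ⟨hpos j t ht, heq j t ht⟩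
  exact tendsto_iSup_div_iInf fun i j =>
    tendsto_div_of_logQuartic_eq hc₁.le hc₂.le hc₃ tendsto_id (hω i) (hω j)

/-- If each SNR singular value satisfies the implicit equation
with common constants `c₁, c₂, c₃` then the ratio of the largest to the
smallest tends to one. -/
theorem snr_singular_values_equalize
    (C : ℕ) (hC : 2 ≤ C) [Nonempty (Fin (C - 1))]
    (c₁ c₂ c₃ : ℝ) (hc₁ : 0 < c₁) (hc₂ : 0 < c₂) (hc₃ : 0 < c₃)
    (a : Fin (C - 1) → ℝ)
    (ω : Fin (C - 1) → ℝ → ℝ)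
    (hpos : ∀ j t, 0 ≤ t → 0 < ω j t)
    (heq : ∀ j t, 0 ≤ t →
      c₁ * Real.log (ω j t) + c₂ * (ω j t) ^ 2 + c₃ * (ω j t) ^ 4 = a j + t) :
    Tendsto (fun t => (⨆ j, ω j t) / (⨅ j, ω j t)) atTop (nhds 1) :=
  snr_singular_values_equalize_general C c₁ c₂ c₃ hc₁ hc₂ hc₃ a ω hpos heq
end

section
/- Let $X_0 \in \mathbb{R}^{C\times CN}$ satisfy $X_0 C X_0^\top = I$ for a symmetric positive-semidefinite matrix $C$. Then for a perturbation $\Delta$, the renormalized step satisfies $\big((X_0+\Delta)C(X_0+\Delta)^\top\big)^{-1/2}(X_0 + \Delta) = X_0 + \Pi(\Delta) + O(\|\Delta\|^2)$ as $\Delta \to 0$, where $\Pi(\Delta) = \Delta - \frac{1}{2}(\Delta C X_0^\top + X_0 C \Delta^\top)X_0$ is the projection onto the tangent space of $\{X : XCX^\top = I\}$ at $X_0$. -/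
open Matrix Asymptotics Filter Topology

attribute [local instance] Matrix.normedAddCommGroup Matrix.normedSpace

/-! Write `(X₀ + Δ) C (X₀ + Δ)ᵀ = 1 + A` with `A = X₀CΔᵀ + ΔCX₀ᵀ + ΔCΔᵀ = O(‖Δ‖)`. Since
`S² = (1 + A)⁻¹ → 1`, we get `S² - 1 = -S²A = O(‖A‖)`. Positivity of `S` upgrades this to
`S - 1 = O(‖A‖)`: in Frobenius norm `‖S - 1‖ ≤ ‖S² - 1‖`, because `S² - 1 = (S - 1)(S + 1)` and
`S + 1 ≥ 1`. Expanding `S²(1 + A) = 1` around `S = 1` then gives `S = 1 - A/2 + O(‖A‖²)`, and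
`S(X₀ + Δ) - X₀ - Π(Δ) = (S - 1 + A/2)X₀ + (S - 1)Δ - ΔCΔᵀX₀/2 = O(‖Δ‖²)`. -/

namespace Matrix

variable {l m n : Type*} [Fintype l] [Fintype m] [Fintype n]

theorem norm_mul_le_card_mul {α : Type*} [NormedRing α] (A : Matrix l m α) (B : Matrix m n α) :
    ‖A * B‖ ≤ Fintype.card m * ‖A‖ * ‖B‖ := by
  refine (norm_le_iff (by positivity)).2 fun i j => ?_
  calc ‖(A * B) i j‖ ≤ ∑ k, ‖A i k * B k j‖ := norm_sum_le _ _
    _ ≤ ∑ _k : m, ‖A‖ * ‖B‖ := Finset.sum_le_sum fun k _ =>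
        (norm_mul_le _ _).trans (mul_le_mul (norm_entry_le_entrywise_sup_norm A)
          (norm_entry_le_entrywise_sup_norm B) (norm_nonneg _) (norm_nonneg _))
    _ = Fintype.card m * ‖A‖ * ‖B‖ := by simp [mul_assoc]

theorem isBigO_mul {α ι : Type*} [NormedRing α] {L : Filter ι} {f : ι → Matrix l m α}
    {g : ι → Matrix m n α} {u v : ι → ℝ} (hf : f =O[L] u) (hg : g =O[L] v) :
    (fun x => f x * g x) =O[L] fun x => u x * v x := by
  refine (IsBigO.of_bound (Fintype.card m) (Eventually.of_forall fun x => ?_)).trans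
    (hf.norm_left.mul hg.norm_left)
  simpa [mul_assoc] using norm_mul_le_card_mul (f x) (g x)

theorem isBigO_mul_mul_transpose (M : Matrix n n ℝ) (L : Filter (Matrix m n ℝ)) :
    (fun Δ => Δ * M * Δᵀ) =O[L] fun Δ => ‖Δ‖ ^ 2 := by
  simpa [sq] using isBigO_mul (isBigO_mul (isBigO_norm_right.mpr (isBigO_refl _ L))
    (isBigO_const_one ℝ M L)) (.of_norm_le fun Δ => (norm_transpose Δ).le)

theorem isBigO_mul_mul_transpose_add_sub (X : Matrix m n ℝ) (M : Matrix n n ℝ) :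
    (fun Δ => (X + Δ) * M * (X + Δ)ᵀ - X * M * Xᵀ) =O[𝓝 0] fun Δ => ‖Δ‖ := by
  have hΔ : (fun Δ => Δ) =O[𝓝 0] fun Δ : Matrix m n ℝ => ‖Δ‖ :=
    isBigO_norm_right.mpr (isBigO_refl _ _)
  have hΔt : (fun Δ => Δᵀ) =O[𝓝 0] fun Δ : Matrix m n ℝ => ‖Δ‖ :=
    .of_norm_le fun Δ => (norm_transpose Δ).le
  have hlin₁ := isBigO_mul (isBigO_const_one ℝ (X * M) _) hΔt
  have hlin₂ := isBigO_mul hΔ (isBigO_const_one ℝ (M * Xᵀ) _)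
  have hquad := (isBigO_mul_mul_transpose M (𝓝 0)).trans
    (isLittleO_norm_pow_id (E' := Matrix m n ℝ) one_lt_two).isBigO.norm_right
  simp only [one_mul, mul_one, ← Matrix.mul_assoc] at hlin₁ hlin₂
  refine ((hlin₁.add hlin₂).add hquad).congr_left fun Δ => ?_
  simp only [transpose_add, Matrix.add_mul, Matrix.mul_add]
  abel

theorem trace_transpose_mul_self (A : Matrix m n ℝ) :
    (Aᵀ * A).trace = ∑ i, ∑ j, A i j ^ 2 := by
  simp only [trace, diag, mul_apply, transpose_apply, ← sq]
  exact Finset.sum_comm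

theorem sq_norm_le_trace_transpose_mul_self (A : Matrix m n ℝ) :
    ‖A‖ ^ 2 ≤ (Aᵀ * A).trace := by
  have htrace : 0 ≤ (Aᵀ * A).trace := by
    rw [trace_transpose_mul_self]; positivity
  have hentry : ∀ i j, A i j ^ 2 ≤ (Aᵀ * A).trace := fun i j => by
    rw [trace_transpose_mul_self]
    exact (Finset.single_le_sum (f := fun j => A i j ^ 2) (fun _ _ => sq_nonneg _)
      (Finset.mem_univ j)).trans (Finset.single_le_sum (f := fun i => ∑ j, A i j ^ 2)
        (fun _ _ => by positivity) (Finset.mem_univ i))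
  have hnorm : ‖A‖ ≤ √(Aᵀ * A).trace :=
    (norm_le_iff (Real.sqrt_nonneg _)).2 fun i j => Real.abs_le_sqrt (hentry i j)
  calc ‖A‖ ^ 2 ≤ √(Aᵀ * A).trace ^ 2 := pow_le_pow_left₀ (norm_nonneg _) hnorm 2
    _ = (Aᵀ * A).trace := Real.sq_sqrt htrace

theorem trace_transpose_mul_self_le (A : Matrix m n ℝ) :
    (Aᵀ * A).trace ≤ Fintype.card m * Fintype.card n * ‖A‖ ^ 2 := by
  rw [trace_transpose_mul_self]
  calc ∑ i, ∑ j, A i j ^ 2 ≤ ∑ _i : m, ∑ _j : n, ‖A‖ ^ 2 :=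
        Finset.sum_le_sum fun i _ => Finset.sum_le_sum fun j _ => (sq_abs (A i j)).symm.le.trans
          (pow_le_pow_left₀ (abs_nonneg _) (norm_entry_le_entrywise_sup_norm A) 2)
    _ = _ := by simp [mul_assoc]

variable [DecidableEq n]

theorem PosSemidef.trace_sub_one_sq_le {S : Matrix n n ℝ} (hS : S.PosSemidef) :
    ((S - 1)ᵀ * (S - 1)).trace ≤ ((S * S - 1)ᵀ * (S * S - 1)).trace := by
  set B := S - 1
  have hSt : Sᵀ = S := hS.isHermitian
  have hBt : Bᵀ = B := by simp [B, hSt]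
  have hSB : (S * B)ᴴ * (S * B) = B * S * S * B := by
    simp only [conjTranspose_eq_transpose_of_trivial, transpose_mul, hSt, hBt, Matrix.mul_assoc]
  have hBSB : Bᴴ * S * B = B * S * B := by
    simp only [conjTranspose_eq_transpose_of_trivial, hBt]
  have hexpand :
      (S * S - 1)ᵀ * (S * S - 1) = B * S * S * B + B * S * B + B * S * B + Bᵀ * B := by
    simp only [transpose_sub, transpose_mul, hSt, transpose_one, hBt, B]
    noncomm_ring
  have h1 := (posSemidef_conjTranspose_mul_self (S * B)).trace_nonneg
  have h2 := (hS.conjTranspose_mul_mul_same B).trace_nonneg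
  rw [hSB] at h1
  rw [hBSB] at h2
  rw [hexpand, trace_add, trace_add, trace_add]
  linarith

theorem PosSemidef.norm_sub_one_le {S : Matrix n n ℝ} (hS : S.PosSemidef) :
    ‖S - 1‖ ≤ Fintype.card n * ‖S * S - 1‖ := by
  refine le_of_sq_le_sq ?_ (by positivity)
  calc ‖S - 1‖ ^ 2 ≤ ((S - 1)ᵀ * (S - 1)).trace := sq_norm_le_trace_transpose_mul_self _
    _ ≤ ((S * S - 1)ᵀ * (S * S - 1)).trace := hS.trace_sub_one_sq_le
    _ ≤ Fintype.card n * Fintype.card n * ‖S * S - 1‖ ^ 2 := trace_transpose_mul_self_le _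
    _ = (Fintype.card n * ‖S * S - 1‖) ^ 2 := by ring

theorem mul_self_mul_eq_one_of_mul_mul_eq_one {α : Type*} [CommRing α] {S M : Matrix n n α}
    (h : S * M * S = 1) : S * S * M = 1 := by
  rwa [Matrix.mul_assoc, mul_eq_one_comm, Matrix.mul_assoc, mul_eq_one_comm] at h

section InvSqrt

variable {ι : Type*} {L : Filter ι} {S A : ι → Matrix n n ℝ}

theorem isBigO_mul_self_sub_one (hS : ∀ᶠ x in L, S x * (1 + A x) * S x = 1)
    (hA : Tendsto A L (𝓝 0)) : (fun x => S x * S x - 1) =O[L] A := by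
  have hSS : ∀ᶠ x in L, S x * S x * (1 + A x) = 1 :=
    hS.mono fun _ => mul_self_mul_eq_one_of_mul_mul_eq_one
  have hinv : Tendsto (fun x => (1 + A x)⁻¹) L (𝓝 1) := by
    have hcont : ContinuousAt Inv.inv (1 : Matrix n n ℝ) :=
      continuousAt_matrix_inv 1 (by simp)
    have hsum : Tendsto (fun x => 1 + A x) L (𝓝 1) := by
      simpa using (tendsto_const_nhds (x := (1 : Matrix n n ℝ))).add hA
    have h := hcont.tendsto.comp hsum
    rw [inv_one] at h
    exact h
  have hlim : Tendsto (fun x => S x * S x) L (𝓝 1) :=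
    hinv.congr' (hSS.mono fun _ hx => inv_eq_left_inv hx)
  have hsub : ∀ᶠ x in L, -(S x * S x * A x) = S x * S x - 1 := hSS.mono fun x hx => by
    rw [mul_add, mul_one] at hx
    rw [← hx]
    abel
  refine IsBigO.congr' ?_ hsub EventuallyEq.rfl
  simpa using
    (isBigO_mul (hlim.isBigO_one ℝ) (isBigO_norm_right.mpr (isBigO_refl A L))).neg_left

theorem isBigO_invSqrt_sub_one
    (hS : ∀ᶠ x in L, (S x).PosSemidef ∧ S x * (1 + A x) * S x = 1)
    (hA : Tendsto A L (𝓝 0)) :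
    (fun x => S x - 1) =O[L] A :=
  (IsBigO.of_bound (Fintype.card n) (hS.mono fun _ hx => hx.1.norm_sub_one_le)).trans
    (isBigO_mul_self_sub_one (hS.mono fun _ => And.right) hA)

theorem isBigO_invSqrt_sub_one_add_half
    (hS : ∀ᶠ x in L, (S x).PosSemidef ∧ S x * (1 + A x) * S x = 1)
    (hA : Tendsto A L (𝓝 0)) :
    (fun x => S x - 1 + (1 / 2 : ℝ) • A x) =O[L] fun x => ‖A x‖ ^ 2 := by
  have hB := isBigO_norm_right.mpr (isBigO_invSqrt_sub_one hS hA)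
  have hD := isBigO_norm_right.mpr (isBigO_mul_self_sub_one (hS.mono fun _ => And.right) hA)
  have hidentity : ∀ᶠ x in L,
      -(1 / 2 : ℝ) • ((S x - 1) * (S x - 1) + (S x * S x - 1) * A x) =
        S x - 1 + (1 / 2 : ℝ) • A x := hS.mono fun x hx => by
    have h := mul_self_mul_eq_one_of_mul_mul_eq_one hx.2
    rw [mul_add, mul_one] at h
    rw [sub_mul (S x * S x), one_mul, eq_sub_of_add_eq' h, sub_mul, mul_sub, mul_one, one_mul]
    module
  have hquadratic := ((isBigO_mul hB hB).add
    (isBigO_mul hD (isBigO_norm_right.mpr (isBigO_refl A L)))).const_smul_left (-(1 / 2 : ℝ))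
  exact hquadratic.congr' hidentity (.of_forall fun _ => (sq _).symm)

end InvSqrt

end Matrix

theorem renormalized_step_first_order_general
    (C N : ℕ)
    (Cm : Matrix (Fin (C * N)) (Fin (C * N)) ℝ)
    (X₀ : Matrix (Fin C) (Fin (C * N)) ℝ)
    (hX₀ : X₀ * Cm * X₀ᵀ = 1)
    -- `S Δ` is the inverse positive-semidefinite square root
    -- `((X₀+Δ)C(X₀+Δ)ᵀ)^{-1/2}`, characterized near `Δ = 0` by the equation
    -- `S Δ * ((X₀+Δ)C(X₀+Δ)ᵀ) * S Δ = 1` with `S Δ` symmetric PSD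
    (S : Matrix (Fin C) (Fin (C * N)) ℝ → Matrix (Fin C) (Fin C) ℝ)
    (hS : ∀ᶠ Δ in nhds (0 : Matrix (Fin C) (Fin (C * N)) ℝ),
      (S Δ).IsSymm ∧ (S Δ).PosSemidef ∧
        S Δ * ((X₀ + Δ) * Cm * (X₀ + Δ)ᵀ) * S Δ = 1)
    (Pi : Matrix (Fin C) (Fin (C * N)) ℝ → Matrix (Fin C) (Fin (C * N)) ℝ)
    (hPi : ∀ Z, Pi Z = Z - ((1 : ℝ) / 2) • ((X₀ * Cm * Zᵀ + Z * Cm * X₀ᵀ) * X₀)) :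
    (fun Δ : Matrix (Fin C) (Fin (C * N)) ℝ =>
        S Δ * (X₀ + Δ) - (X₀ + Pi Δ))
      =O[nhds 0] (fun Δ => ‖Δ‖ ^ 2) := by
  set A := fun Δ => (X₀ + Δ) * Cm * (X₀ + Δ)ᵀ - 1
  have hA : A =O[𝓝 0] fun Δ => ‖Δ‖ := by
    simpa only [hX₀] using isBigO_mul_mul_transpose_add_sub X₀ Cm
  have hS' : ∀ᶠ Δ in 𝓝 0, (S Δ).PosSemidef ∧ S Δ * (1 + A Δ) * S Δ = 1 :=
    hS.mono fun Δ h => ⟨h.2.1, by simpa only [A, add_sub_cancel] using h.2.2⟩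
  have hA0 : Tendsto A (𝓝 0) (𝓝 0) := hA.trans_tendsto tendsto_norm_zero
  have hB := isBigO_invSqrt_sub_one hS' hA0 |>.trans hA
  have hT := isBigO_invSqrt_sub_one_add_half hS' hA0 |>.trans (hA.norm_left.pow 2)
  have hsplit : ∀ Δ, (S Δ - 1 + (1 / 2 : ℝ) • A Δ) * X₀ + (S Δ - 1) * Δ
      - (1 / 2 : ℝ) • (Δ * Cm * Δᵀ * X₀) = S Δ * (X₀ + Δ) - (X₀ + Pi Δ) := fun Δ => by
    simp only [hPi, A, transpose_add, Matrix.add_mul, Matrix.mul_add, Matrix.sub_mul,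
      Matrix.one_mul, hX₀, Matrix.smul_mul, smul_add, smul_sub]
    abel
  have h₁ := isBigO_mul hT (isBigO_const_one ℝ X₀ _)
  have h₂ := isBigO_mul hB (isBigO_norm_right.mpr (isBigO_refl (fun Δ => Δ) (𝓝 0)))
  have h₃ := (isBigO_mul (isBigO_mul_mul_transpose Cm (𝓝 0))
    (isBigO_const_one ℝ X₀ _)).const_smul_left (1 / 2 : ℝ)
  simp only [mul_one, ← sq] at h₁ h₂ h₃
  exact ((h₁.add h₂).sub h₃).congr_left hsplit

/-- First-order equivalence of a renormalized step with a
tangent-space-projected step: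
`((X₀+Δ)C(X₀+Δ)ᵀ)^{-1/2}(X₀+Δ) = X₀ + Π(Δ) + O(‖Δ‖²)` as `Δ → 0`. -/
theorem renormalized_step_first_order
    (C N : ℕ) (hC : 0 < C) (hN : 0 < N)
    (Cm : Matrix (Fin (C * N)) (Fin (C * N)) ℝ)
    (hCsymm : Cm.IsSymm) (hCpsd : Cm.PosSemidef)
    (X₀ : Matrix (Fin C) (Fin (C * N)) ℝ)
    (hX₀ : X₀ * Cm * X₀ᵀ = 1)
    -- `S Δ` is the inverse positive-semidefinite square root
    -- `((X₀+Δ)C(X₀+Δ)ᵀ)^{-1/2}`, characterized near `Δ = 0` by the equation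
    -- `S Δ * ((X₀+Δ)C(X₀+Δ)ᵀ) * S Δ = 1` with `S Δ` symmetric PSD
    (S : Matrix (Fin C) (Fin (C * N)) ℝ → Matrix (Fin C) (Fin C) ℝ)
    (hS : ∀ᶠ Δ in nhds (0 : Matrix (Fin C) (Fin (C * N)) ℝ),
      (S Δ).IsSymm ∧ (S Δ).PosSemidef ∧
        S Δ * ((X₀ + Δ) * Cm * (X₀ + Δ)ᵀ) * S Δ = 1)
    (Pi : Matrix (Fin C) (Fin (C * N)) ℝ → Matrix (Fin C) (Fin (C * N)) ℝ)
    (hPi : ∀ Z, Pi Z = Z - ((1 : ℝ) / 2) • ((X₀ * Cm * Zᵀ + Z * Cm * X₀ᵀ) * X₀)) :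
    (fun Δ : Matrix (Fin C) (Fin (C * N)) ℝ =>
        S Δ * (X₀ + Δ) - (X₀ + Pi Δ))
      =O[nhds 0] (fun Δ => ‖Δ‖ ^ 2) :=
  renormalized_step_first_order_general C N Cm X₀ hX₀ S hS Pi hPi
end
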